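/- arXiv:2010.02009 — 7 statements merged into one kernel-verified Lean document; each statement's English description precedes it below -/
import Mathlib

section
/- Let G be a connected weighted graph with vertex set X, edge weight b, and measure m, and let K be a finite connected proper subset of X. Suppose u : X × [0,T] → ℝ is such that t ↦ u(x,t) is continuously differentiable on (0,T) for every x ∈ K, u(·,t) is in the formal domain of the Laplacian for all t ∈ (0,T], (ℒ + ∂_t)u ≥ 0 on K × (0,T), and u ≥ 0 on ((X∖K) × (0,T]) ∪ (K × {0}). Then u ≥ 0 on K × [0,T]. -/
/-!
Perturbing `u` to `u + ε t` makes the heat inequality strict. If the perturbed function took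
a negative value on `K × [0, τ]` with `τ < T`, its minimum there would sit at some `(x₀, t₀)`
with `t₀ > 0`; by the boundary condition it is then a minimum over all of `X` at time `t₀`,
so `ℒ ≤ 0` at `(x₀, t₀)`, while minimality in time from the left gives `∂_t ≤ 0`,
contradicting `ℒ + ∂_t > 0`.
Letting `ε → 0` gives `u ≥ 0` for times `< T`, and continuity covers the endpoint `T`.
-/

open Set Filter Topology

/-- The formal graph Laplacian `ℒf(x) = (1/m(x)) ∑_y b(x,y)(f(x) − f(y))`. -/
noncomputable def lap {X : Type*} (b : X → X → ℝ) (m : X → ℝ) (f : X → ℝ) (x : X) : ℝ :=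
  (1 / m x) * ∑' y, b x y * (f x - f y)

/-- A set `K` is connected in the graph `b` if any two of its vertices are joined by
a path of neighbors staying inside `K`. -/
def ConnIn {X : Type*} (b : X → X → ℝ) (K : Set X) : Prop :=
  ∀ x ∈ K, ∀ y ∈ K, ∃ (n : ℕ) (p : ℕ → X), p 0 = x ∧ p n = y ∧ (∀ i ≤ n, p i ∈ K) ∧
    ∀ i < n, 0 < b (p i) (p (i + 1))

lemma deriv_nonpos_of_forall_Icc_le {g : ℝ → ℝ} {a t₀ : ℝ} (ha : a < t₀)
    (hg : DifferentiableAt ℝ g t₀) (hmin : ∀ t ∈ Icc a t₀, g t₀ ≤ g t) :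
    deriv g t₀ ≤ 0 := by
  have hslope : Tendsto (slope g t₀) (𝓝[<] t₀) (𝓝 (deriv g t₀)) :=
    (hasDerivAt_iff_tendsto_slope.1 hg.hasDerivAt).mono_left
      (nhdsWithin_mono _ fun _ ht => ne_of_lt ht)
  refine le_of_tendsto hslope ?_
  filter_upwards [Ioo_mem_nhdsLT ha] with t ht
  rw [slope_def_field]
  exact div_nonpos_of_nonneg_of_nonpos (sub_nonneg.2 (hmin t ⟨ht.1.le, ht.2.le⟩))
    (sub_nonpos.2 ht.2.le)

section Laplacian

variable {X : Type*} {b : X → X → ℝ} {m : X → ℝ}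

lemma lap_add_const (f : X → ℝ) (c : ℝ) (x : X) :
    lap b m (fun z => f z + c) x = lap b m f x := by
  simp only [lap, add_sub_add_right_eq_sub]

lemma lap_nonpos_of_forall_le {f : X → ℝ} {x : X} (hb : ∀ y, 0 ≤ b x y) (hm : 0 ≤ m x)
    (hmin : ∀ y, f x ≤ f y) : lap b m f x ≤ 0 :=
  mul_nonpos_of_nonneg_of_nonpos (one_div_nonneg.2 hm)
    (tsum_nonpos fun y => mul_nonpos_of_nonneg_of_nonpos (hb y) (sub_nonpos.2 (hmin y)))

end Laplacian

lemma Set.Finite.exists_forall_le_of_continuousOn_Icc {X : Type*} {K : Set X} (hK : K.Finite)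
    {v : X → ℝ → ℝ} {a τ : ℝ} (hcont : ∀ x ∈ K, ContinuousOn (v x) (Icc a τ))
    (hne : (K ×ˢ Icc a τ).Nonempty) :
    ∃ x₀ ∈ K, ∃ t₀ ∈ Icc a τ, ∀ x ∈ K, ∀ t ∈ Icc a τ, v x₀ t₀ ≤ v x t := by
  obtain ⟨⟨x₁, t₁⟩, hx₁, ht₁⟩ := hne
  have hmin_time : ∀ x ∈ K, ∃ t ∈ Icc a τ, IsMinOn (v x) (Icc a τ) t := fun x hx =>
    isCompact_Icc.exists_isMinOn ⟨t₁, ht₁⟩ (hcont x hx)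
  choose! τ' hτ'_mem hτ'_min using hmin_time
  obtain ⟨x₀, hx₀, hx₀_min⟩ := K.exists_min_image (fun x => v x (τ' x)) hK ⟨x₁, hx₁⟩
  exact ⟨x₀, hx₀, τ' x₀, hτ'_mem x₀ hx₀, fun x hx t ht =>
    (hx₀_min x hx).trans (hτ'_min x hx ht)⟩

section HeatEquation

variable {X : Type*} {b : X → X → ℝ} {m : X → ℝ} {K : Set X}

theorem nonneg_of_lap_add_deriv_pos (hb : ∀ x y, 0 ≤ b x y) (hm : ∀ x, 0 ≤ m x)
    (hK : K.Finite) {τ : ℝ} {v : X → ℝ → ℝ}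
    (hcont : ∀ x ∈ K, ContinuousOn (v x) (Icc 0 τ))
    (hdiff : ∀ x ∈ K, ∀ t ∈ Ioc 0 τ, DifferentiableAt ℝ (v x) t)
    (hheat : ∀ x ∈ K, ∀ t ∈ Ioc 0 τ, 0 < lap b m (fun z => v z t) x + deriv (v x) t)
    (hout : ∀ x ∉ K, ∀ t ∈ Ioc 0 τ, 0 ≤ v x t) (hinit : ∀ x ∈ K, 0 ≤ v x 0) :
    ∀ x ∈ K, ∀ t ∈ Icc 0 τ, 0 ≤ v x t := by
  by_contra! ⟨x₁, hx₁, t₁, ht₁, hneg⟩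
  obtain ⟨x₀, hx₀, t₀, ht₀, hmin⟩ :=
    hK.exists_forall_le_of_continuousOn_Icc hcont ⟨(x₁, t₁), hx₁, ht₁⟩
  have hmin_neg : v x₀ t₀ < 0 := (hmin x₁ hx₁ t₁ ht₁).trans_lt hneg
  have ht₀_pos : 0 < t₀ := ht₀.1.lt_of_ne fun h => (hinit x₀ hx₀).not_gt (h ▸ hmin_neg)
  have ht₀_Ioc : t₀ ∈ Ioc 0 τ := ⟨ht₀_pos, ht₀.2⟩
  have hderiv : deriv (v x₀) t₀ ≤ 0 :=
    deriv_nonpos_of_forall_Icc_le ht₀_pos (hdiff x₀ hx₀ t₀ ht₀_Ioc)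
      fun t ht => hmin x₀ hx₀ t ⟨ht.1, ht.2.trans ht₀.2⟩
  have hlap : lap b m (fun z => v z t₀) x₀ ≤ 0 := by
    refine lap_nonpos_of_forall_le (hb x₀) (hm x₀) fun y => ?_
    by_cases hy : y ∈ K
    · exact hmin y hy t₀ ht₀
    · exact hmin_neg.le.trans (hout y hy t₀ ht₀_Ioc)
  linarith [hheat x₀ hx₀ t₀ ht₀_Ioc]

theorem add_mul_nonneg_of_lap_add_deriv_nonneg (hb : ∀ x y, 0 ≤ b x y) (hm : ∀ x, 0 ≤ m x)
    (hK : K.Finite) {T : ℝ} {u : X → ℝ → ℝ}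
    (hcont : ∀ x ∈ K, ContinuousOn (u x) (Icc 0 T))
    (hdiff : ∀ x ∈ K, ∀ t ∈ Ioo 0 T, DifferentiableAt ℝ (u x) t)
    (hheat : ∀ x ∈ K, ∀ t ∈ Ioo 0 T, 0 ≤ lap b m (fun z => u z t) x + deriv (u x) t)
    (hout : ∀ x ∉ K, ∀ t ∈ Ioc 0 T, 0 ≤ u x t) (hinit : ∀ x ∈ K, 0 ≤ u x 0)
    {ε : ℝ} (hε : 0 < ε) {x : X} (hx : x ∈ K) {s : ℝ} (hs : s ∈ Ico 0 T) :
    0 ≤ u x s + ε * s := by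
  have hIoc : Ioc 0 s ⊆ Ioo 0 T := fun t ht => ⟨ht.1, ht.2.trans_lt hs.2⟩
  have hderiv : ∀ x ∈ K, ∀ t ∈ Ioc 0 s, deriv (fun r => u x r + ε * r) t = deriv (u x) t + ε :=
    fun x hx t ht => by
      simpa using
        ((hdiff x hx t (hIoc ht)).hasDerivAt.fun_add ((hasDerivAt_id t).const_mul ε)).deriv
  refine nonneg_of_lap_add_deriv_pos (v := fun x r => u x r + ε * r) hb hm hK
    (fun x hx => ((hcont x hx).mono (Icc_subset_Icc_right hs.2.le)).add (by fun_prop))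
    (fun x hx t ht => (hdiff x hx t (hIoc ht)).add (differentiableAt_id.const_mul ε))
    (fun x hx t ht => ?_) (fun x hx t ht => ?_) (fun x hx => by simpa using hinit x hx)
    x hx s ⟨hs.1, le_rfl⟩
  · rw [lap_add_const, hderiv x hx t ht]
    linarith [hheat x hx t (hIoc ht)]
  · exact add_nonneg (hout x hx t ⟨ht.1, ht.2.trans hs.2.le⟩) (mul_nonneg hε.le ht.1.le)

end HeatEquation

lemma nonneg_of_forall_pos_add_mul_nonneg {a s : ℝ} (h : ∀ ε > 0, 0 ≤ a + ε * s) : 0 ≤ a := by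
  have hcont : Continuous fun ε : ℝ => a + ε * s := by fun_prop
  have hlim : Tendsto (fun ε => a + ε * s) (𝓝[>] 0) (𝓝 a) :=
    (hcont.tendsto' 0 a (by simp)).mono_left nhdsWithin_le_nhds
  exact ge_of_tendsto hlim (eventually_nhdsWithin_of_forall h)

theorem minimum_principle_heat_general {X : Type*} (b : X → X → ℝ) (m : X → ℝ)
    (hb_nonneg : ∀ x y, 0 ≤ b x y)
    (hm : ∀ x, 0 < m x)
    (K : Set X) (hKfin : K.Finite)
    (T : ℝ)
    (u : X → ℝ → ℝ)
    (hcont : ∀ x ∈ K, ContinuousOn (u x) (Set.Icc 0 T))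
    (hdiff : ∀ x ∈ K, ∀ t ∈ Set.Ioo 0 T,
      DifferentiableAt ℝ (u x) t ∧ ContinuousAt (deriv (u x)) t)
    (hA1 : ∀ x ∈ K, ∀ t ∈ Set.Ioo 0 T,
      0 ≤ lap b m (fun z => u z t) x + deriv (u x) t)
    (hA2out : ∀ x ∉ K, ∀ t ∈ Set.Ioc 0 T, 0 ≤ u x t)
    (hA2init : ∀ x ∈ K, 0 ≤ u x 0) :
    ∀ x ∈ K, ∀ t ∈ Set.Icc 0 T, 0 ≤ u x t := by
  intro x hx t ht
  rcases ht.1.eq_or_lt with rfl | ht_pos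
  · exact hA2init x hx
  have hbefore : ∀ s ∈ Ico 0 t, 0 ≤ u x s := fun s hs =>
    nonneg_of_forall_pos_add_mul_nonneg fun ε hε =>
      add_mul_nonneg_of_lap_add_deriv_nonneg hb_nonneg (fun x => (hm x).le) hKfin hcont
        (fun x hx t ht => (hdiff x hx t ht).1) hA1 hA2out hA2init hε hx
        ⟨hs.1, hs.2.trans_le ht.2⟩
  have hcont_t : ContinuousOn (u x) (closure (Ico 0 t)) := by
    rw [closure_Ico ht_pos.ne]
    exact (hcont x hx).mono (Icc_subset_Icc_right ht.2)
  exact le_on_closure hbefore continuousOn_const hcont_t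
    (by rw [closure_Ico ht_pos.ne]; exact ⟨ht.1, le_rfl⟩)

/-- Minimum principle for the heat equation on a finite connected proper subset `K`. -/
theorem minimum_principle_heat {X : Type*} (b : X → X → ℝ) (m : X → ℝ)
    (hb_symm : ∀ x y, b x y = b y x) (hb_nonneg : ∀ x y, 0 ≤ b x y)
    (hb_diag : ∀ x, b x x = 0) (hb_sum : ∀ x, Summable fun y => b x y)
    (hm : ∀ x, 0 < m x)
    (hconn : ConnIn b (Set.univ : Set X))
    (K : Set X) (hKfin : K.Finite) (hKconn : ConnIn b K) (hKproper : K ≠ Set.univ)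
    (T : ℝ) (hT : 0 ≤ T)
    (u : X → ℝ → ℝ)
    (hcont : ∀ x ∈ K, ContinuousOn (u x) (Set.Icc 0 T))
    (hdiff : ∀ x ∈ K, ∀ t ∈ Set.Ioo 0 T,
      DifferentiableAt ℝ (u x) t ∧ ContinuousAt (deriv (u x)) t)
    (hF : ∀ t ∈ Set.Ioc 0 T, ∀ x, Summable fun y => b x y * |u y t|)
    (hA1 : ∀ x ∈ K, ∀ t ∈ Set.Ioo 0 T,
      0 ≤ lap b m (fun z => u z t) x + deriv (u x) t)
    (hA2out : ∀ x ∉ K, ∀ t ∈ Set.Ioc 0 T, 0 ≤ u x t)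
    (hA2init : ∀ x ∈ K, 0 ≤ u x 0) :
    ∀ x ∈ K, ∀ t ∈ Set.Icc 0 T, 0 ≤ u x t :=
  minimum_principle_heat_general b m hb_nonneg hm K hKfin T u hcont hdiff hA1 hA2out hA2init
end

section
/- Let G = (X, b, m) be a weighted graph and let L be the self-adjoint Laplacian on ℓ²(X,m) associated to the closure of the energy form on finitely supported functions. Then L is a bounded operator on ℓ²(X,m) if and only if the weighted vertex degree Deg(x) = (1/m(x)) ∑_y b(x,y) is a bounded function on X. -/
/-- Weighted vertex degree `Deg(x) = (1/m(x)) ∑_y b(x,y)`. -/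
noncomputable def deg {X : Type*} (b : X → X → ℝ) (m : X → ℝ) (x : X) : ℝ :=
  (1 / m x) * ∑' y, b x y

section aux

variable {X : Type*} (b : X → X → ℝ)

private lemma summable_fst (hb_nonneg : ∀ x y, 0 ≤ b x y)
    (hb_sum : ∀ x, Summable fun y => b x y) (f : X → ℝ)
    (hf : (Function.support f).Finite) :
    Summable (fun p : X × X => b p.1 p.2 * f p.1 ^ 2) := by
  have hnn : ∀ p : X × X, 0 ≤ b p.1 p.2 * f p.1 ^ 2 :=
    fun p => mul_nonneg (hb_nonneg p.1 p.2) (sq_nonneg _)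
  apply (summable_prod_of_nonneg hnn).2
  constructor
  · intro x
    exact (hb_sum x).mul_right (f x ^ 2)
  · apply summable_of_finite_support
    apply hf.subset
    intro x hx
    simp only [Function.mem_support] at hx ⊢
    intro h
    apply hx
    simp [h]

private lemma tsum_fst (hb_nonneg : ∀ x y, 0 ≤ b x y)
    (hb_sum : ∀ x, Summable fun y => b x y) (f : X → ℝ)
    (hf : (Function.support f).Finite) :
    ∑' p : X × X, b p.1 p.2 * f p.1 ^ 2 = ∑' x, (∑' y, b x y) * f x ^ 2 := by
  rw [Summable.tsum_prod (summable_fst b hb_nonneg hb_sum f hf)]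
  exact tsum_congr fun x => by simpa using (hb_sum x).tsum_mul_right (f x ^ 2)

private lemma summable_snd (hb_symm : ∀ x y, b x y = b y x) (hb_nonneg : ∀ x y, 0 ≤ b x y)
    (hb_sum : ∀ x, Summable fun y => b x y) (f : X → ℝ)
    (hf : (Function.support f).Finite) :
    Summable (fun p : X × X => b p.1 p.2 * f p.2 ^ 2) := by
  have h := (summable_fst b hb_nonneg hb_sum f hf).prod_symm
  apply h.congr
  intro p
  simp only [Prod.fst_swap, Prod.snd_swap]
  rw [hb_symm p.1 p.2]

private lemma tsum_snd (hb_symm : ∀ x y, b x y = b y x) (hb_nonneg : ∀ x y, 0 ≤ b x y)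
    (hb_sum : ∀ x, Summable fun y => b x y) (f : X → ℝ)
    (hf : (Function.support f).Finite) :
    ∑' p : X × X, b p.1 p.2 * f p.2 ^ 2 = ∑' x, (∑' y, b x y) * f x ^ 2 := by
  rw [← tsum_fst b hb_nonneg hb_sum f hf,
    ← (Equiv.prodComm X X).tsum_eq (fun p : X × X => b p.1 p.2 * f p.1 ^ 2)]
  refine tsum_congr fun p => ?_
  simp only [Equiv.prodComm_apply, Prod.fst_swap, Prod.snd_swap]
  rw [hb_symm p.1 p.2]

private lemma summable_G (hb_symm : ∀ x y, b x y = b y x) (hb_nonneg : ∀ x y, 0 ≤ b x y)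
    (hb_sum : ∀ x, Summable fun y => b x y) (f : X → ℝ)
    (hf : (Function.support f).Finite) :
    Summable (fun p : X × X => 2 * (b p.1 p.2 * f p.1 ^ 2) + 2 * (b p.1 p.2 * f p.2 ^ 2)) :=
  (((summable_fst b hb_nonneg hb_sum f hf).mul_left 2).add
    ((summable_snd b hb_symm hb_nonneg hb_sum f hf).mul_left 2))

private lemma F_le_G (f : X → ℝ) (hb_nonneg : ∀ x y, 0 ≤ b x y) (p : X × X) :
    b p.1 p.2 * (f p.1 - f p.2) ^ 2 ≤
      2 * (b p.1 p.2 * f p.1 ^ 2) + 2 * (b p.1 p.2 * f p.2 ^ 2) := by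
  nlinarith [hb_nonneg p.1 p.2, sq_nonneg (f p.1 - f p.2), sq_nonneg (f p.1 + f p.2),
    mul_nonneg (hb_nonneg p.1 p.2) (sq_nonneg (f p.1 + f p.2))]

private lemma summable_F (hb_symm : ∀ x y, b x y = b y x) (hb_nonneg : ∀ x y, 0 ≤ b x y)
    (hb_sum : ∀ x, Summable fun y => b x y) (f : X → ℝ)
    (hf : (Function.support f).Finite) :
    Summable (fun p : X × X => b p.1 p.2 * (f p.1 - f p.2) ^ 2) :=
  (summable_G b hb_symm hb_nonneg hb_sum f hf).of_nonneg_of_le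
    (fun p => mul_nonneg (hb_nonneg p.1 p.2) (sq_nonneg _))
    (F_le_G b f hb_nonneg)

end aux

/-- The self-adjoint Laplacian `L` associated to the closure of the energy form
`Q(f,f) = (1/2) ∑_{x,y} b(x,y)(f(x)−f(y))²` on finitely supported functions is a bounded
operator on `ℓ²(X,m)` — equivalently, the form is bounded with respect to the
`ℓ²(X,m)`-norm on finitely supported functions — if and only if the weighted degree
`Deg` is a bounded function on `X`. -/
theorem laplacian_bounded_iff_degree_bounded {X : Type*} (b : X → X → ℝ) (m : X → ℝ)
    (hb_symm : ∀ x y, b x y = b y x) (hb_nonneg : ∀ x y, 0 ≤ b x y)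
    (hb_diag : ∀ x, b x x = 0) (hb_sum : ∀ x, Summable fun y => b x y)
    (hm : ∀ x, 0 < m x) :
    (∃ C : ℝ, ∀ f : X → ℝ, (Function.support f).Finite →
        (1 / 2) * ∑' p : X × X, b p.1 p.2 * (f p.1 - f p.2) ^ 2 ≤
          C * ∑' x, f x ^ 2 * m x) ↔
      ∃ D : ℝ, ∀ x, deg b m x ≤ D := by
  classical
  constructor
  · rintro ⟨C, hC⟩
    refine ⟨C, fun x₀ => ?_⟩
    set f : X → ℝ := fun y => if y = x₀ then 1 else 0 with hf_def
    have hf : (Function.support f).Finite := by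
      apply Set.Finite.subset (Set.finite_singleton x₀)
      intro y hy
      simp only [Function.mem_support, hf_def] at hy
      rcases eq_or_ne y x₀ with h | h
      · exact Set.mem_singleton_iff.mpr h
      · simp [h] at hy
    have key := hC f hf
    set S : ℝ := ∑' y, b x₀ y with hS
    have hR : ∑' x, f x ^ 2 * m x = m x₀ := by
      have : ∀ x, f x ^ 2 * m x = if x = x₀ then m x₀ else 0 := by
        intro x
        by_cases h : x = x₀ <;> simp [hf_def, h]
      rw [tsum_congr this, tsum_ite_eq]
    have hFeq : ∀ p : X × X, b p.1 p.2 * (f p.1 - f p.2) ^ 2 =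
        (if p.1 = x₀ then b x₀ p.2 else 0) + (if p.2 = x₀ then b x₀ p.1 else 0) := by
      rintro ⟨x, y⟩
      by_cases h1 : x = x₀ <;> by_cases h2 : y = x₀ <;>
        simp [hf_def, h1, h2, hb_diag, hb_symm x x₀]
    have hsum1 : Summable (fun p : X × X => if p.1 = x₀ then b x₀ p.2 else 0) := by
      have hnn : ∀ p : X × X, 0 ≤ if p.1 = x₀ then b x₀ p.2 else 0 := by
        intro p
        by_cases h : p.1 = x₀ <;> simp [h, hb_nonneg]
      apply (summable_prod_of_nonneg hnn).2
      constructor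
      · intro x
        by_cases h : x = x₀ <;> simp [h, hb_sum x₀, summable_zero]
      · apply summable_of_finite_support
        apply (Set.finite_singleton x₀).subset
        intro x hx
        simp only [Function.mem_support] at hx
        rcases eq_or_ne x x₀ with h | h
        · exact Set.mem_singleton_iff.mpr h
        · simp [h] at hx
    have hsum2 : Summable (fun p : X × X => if p.2 = x₀ then b x₀ p.1 else 0) := by
      have hnn : ∀ p : X × X, 0 ≤ if p.2 = x₀ then b x₀ p.1 else 0 := by
        intro p
        by_cases h : p.2 = x₀ <;> simp [h, hb_nonneg]
      apply (summable_prod_of_nonneg hnn).2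
      constructor
      · intro x
        apply summable_of_finite_support
        apply (Set.finite_singleton x₀).subset
        intro y hy
        simp only [Function.mem_support] at hy
        rcases eq_or_ne y x₀ with h | h
        · exact Set.mem_singleton_iff.mpr h
        · simp [h] at hy
      · have heq : ∀ x, (∑' y, if y = x₀ then b x₀ x else 0) = b x₀ x :=
          fun x => tsum_ite_eq _ _
        exact (hb_sum x₀).congr fun x => (heq x).symm
    have ht1 : ∑' p : X × X, (if p.1 = x₀ then b x₀ p.2 else 0) = S := by
      rw [Summable.tsum_prod hsum1]
      have h1 : ∀ x, (∑' y, if x = x₀ then b x₀ y else 0) = if x = x₀ then S else 0 := by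
        intro x
        by_cases h : x = x₀ <;> simp [h, hS]
      rw [tsum_congr h1, tsum_ite_eq]
    have ht2 : ∑' p : X × X, (if p.2 = x₀ then b x₀ p.1 else 0) = S := by
      rw [Summable.tsum_prod hsum2]
      have h2 : ∀ x, (∑' y, if y = x₀ then b x₀ x else 0) = b x₀ x :=
        fun x => tsum_ite_eq _ _
      rw [tsum_congr h2]
    have hL : ∑' p : X × X, b p.1 p.2 * (f p.1 - f p.2) ^ 2 = S + S := by
      rw [tsum_congr hFeq, Summable.tsum_add hsum1 hsum2, ht1, ht2]
    rw [hL, hR] at key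
    have hSle : S ≤ C * m x₀ := by linarith
    rw [deg, one_div, inv_mul_le_iff₀ (hm x₀), mul_comm]
    exact hSle
  · rintro ⟨D, hD⟩
    refine ⟨2 * D, fun f hf => ?_⟩
    have hDm : ∀ x, ∑' y, b x y ≤ D * m x := by
      intro x
      have h := hD x
      rw [deg, one_div, inv_mul_le_iff₀ (hm x)] at h
      linarith [h]
    have hG := summable_G b hb_symm hb_nonneg hb_sum f hf
    have hF := summable_F b hb_symm hb_nonneg hb_sum f hf
    have step1 : ∑' p : X × X, b p.1 p.2 * (f p.1 - f p.2) ^ 2 ≤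
        ∑' p : X × X, (2 * (b p.1 p.2 * f p.1 ^ 2) + 2 * (b p.1 p.2 * f p.2 ^ 2)) :=
      Summable.tsum_le_tsum (F_le_G b f hb_nonneg) hF hG
    have step2 : ∑' p : X × X, (2 * (b p.1 p.2 * f p.1 ^ 2) + 2 * (b p.1 p.2 * f p.2 ^ 2)) =
        4 * ∑' x, (∑' y, b x y) * f x ^ 2 := by
      rw [Summable.tsum_add ((summable_fst b hb_nonneg hb_sum f hf).mul_left 2)
        ((summable_snd b hb_symm hb_nonneg hb_sum f hf).mul_left 2),
        (summable_fst b hb_nonneg hb_sum f hf).tsum_mul_left 2,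
        (summable_snd b hb_symm hb_nonneg hb_sum f hf).tsum_mul_left 2,
        tsum_fst b hb_nonneg hb_sum f hf, tsum_snd b hb_symm hb_nonneg hb_sum f hf]
      ring
    have hsuppA : Summable (fun x => (∑' y, b x y) * f x ^ 2) := by
      apply summable_of_finite_support
      apply hf.subset
      intro x hx
      simp only [Function.mem_support] at hx ⊢
      intro h; apply hx; simp [h]
    have hsuppC : Summable (fun x => f x ^ 2 * m x) := by
      apply summable_of_finite_support
      apply hf.subset
      intro x hx
      simp only [Function.mem_support] at hx ⊢
      intro h; apply hx; simp [h]
    have step3 : ∑' x, (∑' y, b x y) * f x ^ 2 ≤ D * ∑' x, f x ^ 2 * m x := by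
      rw [← hsuppC.tsum_mul_left D]
      apply Summable.tsum_le_tsum _ hsuppA (hsuppC.mul_left D)
      intro x
      calc (∑' y, b x y) * f x ^ 2 ≤ (D * m x) * f x ^ 2 :=
            mul_le_mul_of_nonneg_right (hDm x) (sq_nonneg _)
      _ = D * (f x ^ 2 * m x) := by ring
    calc (1 / 2) * ∑' p : X × X, b p.1 p.2 * (f p.1 - f p.2) ^ 2
        ≤ (1 / 2) * (4 * ∑' x, (∑' y, b x y) * f x ^ 2) := by
          rw [← step2]; linarith [step1]
    _ = 2 * ∑' x, (∑' y, b x y) * f x ^ 2 := by ring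
    _ ≤ 2 * (D * ∑' x, f x ^ 2 * m x) := by linarith [step3]
    _ = 2 * D * ∑' x, f x ^ 2 * m x := by ring
end

section
/- Let G = (X, b, m) be a weighted graph, v ∈ F bounded with ℒv = λv for some λ < 0, and suppose v(x₀) > 0 for some x₀. Then there exists a path x₀ ∼ x₁ ∼ x₂ ∼ … such that for all n, v(x_{n+1}) ≥ ∏_{k=0}^{n} (1 − λ/Deg(x_k)) · v(x₀). -/
theorem exists_pos_weight_le_of_tsum_mul_le {ι : Type*} {w f : ι → ℝ} {a : ℝ} {i : ι}
    (hw : ∀ j, 0 ≤ w j) (hi : 0 < w i) (hws : Summable w) (hwf : Summable fun j => w j * f j)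
    (h : (∑' j, w j) * a ≤ ∑' j, w j * f j) : ∃ j, 0 < w j ∧ a ≤ f j := by
  by_contra! hlt
  have hle : ∀ j, w j * f j ≤ w j * a := fun j => by
    rcases (hw j).eq_or_lt with hzero | hpos
    · simp [← hzero]
    · exact mul_le_mul_of_nonneg_left (hlt j hpos).le (hw j)
  have := hwf.tsum_lt_tsum hle (mul_lt_mul_of_pos_left (hlt i hi) hi) (hws.mul_right a)
  rw [tsum_mul_right] at this
  linarith

theorem exists_seq_of_forall_exists {α : Type*} {P : α → Prop} {r : α → α → Prop}
    (h : ∀ x, P x → ∃ y, P y ∧ r x y) {x₀ : α} (h₀ : P x₀) :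
    ∃ p : ℕ → α, p 0 = x₀ ∧ ∀ n, P (p n) ∧ r (p n) (p (n + 1)) := by
  choose! f hfP hfr using h
  have hP : ∀ n, P (f^[n] x₀) := fun n => by
    induction n with
    | zero => exact h₀
    | succ n ih => rw [Function.iterate_succ_apply']; exact hfP _ ih
  refine ⟨fun n => f^[n] x₀, rfl, fun n => ⟨hP n, ?_⟩⟩
  simp only [Function.iterate_succ_apply']
  exact hfr _ (hP n)

theorem prod_range_mul_le_of_mul_le_succ {a c : ℕ → ℝ} (hc : ∀ n, 0 ≤ c n)
    (h : ∀ n, c n * a n ≤ a (n + 1)) (n : ℕ) : (∏ k ∈ Finset.range n, c k) * a 0 ≤ a n := by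
  induction n with
  | zero => simp
  | succ n ih =>
    calc (∏ k ∈ Finset.range (n + 1), c k) * a 0
        = c n * ((∏ k ∈ Finset.range n, c k) * a 0) := by rw [Finset.prod_range_succ]; ring
      _ ≤ c n * a n := mul_le_mul_of_nonneg_left ih (hc n)
      _ ≤ a (n + 1) := h n

section WeightedGraph

variable {X : Type*} {b : X → X → ℝ} {m : X → ℝ} {v : X → ℝ} {lam : ℝ} {x : X}

theorem deg_nonneg (hb_nonneg : ∀ x y, 0 ≤ b x y) (hm : ∀ x, 0 < m x) (x : X) :
    0 ≤ deg b m x :=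
  mul_nonneg (one_div_nonneg.mpr (hm x).le) (tsum_nonneg (hb_nonneg x))

theorem one_le_one_sub_div_deg (hb_nonneg : ∀ x y, 0 ≤ b x y) (hm : ∀ x, 0 < m x)
    (hlam : lam ≤ 0) (x : X) : 1 ≤ 1 - lam / deg b m x := by
  have := div_nonpos_of_nonpos_of_nonneg hlam (deg_nonneg hb_nonneg hm x)
  linarith

theorem tsum_mul_eq_of_lap_eq (hmx : m x ≠ 0) (hbx : Summable (b x))
    (hbv : Summable fun y => b x y * v y) (h : lap b m v x = lam * v x) :
    ∑' y, b x y * v y = m x * (deg b m x - lam) * v x := by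
  have hsplit : ∑' y, b x y * (v x - v y) = (∑' y, b x y) * v x - ∑' y, b x y * v y := by
    simp_rw [mul_sub]
    rw [(hbx.mul_right _).tsum_sub hbv, tsum_mul_right]
  rw [lap, hsplit] at h
  rw [deg]
  field_simp at h ⊢
  linarith

theorem exists_adj_le_of_lap_eq (hb_nonneg : ∀ x y, 0 ≤ b x y)
    (hb_sum : ∀ x, Summable fun y => b x y) (hm : ∀ x, 0 < m x)
    (hvF : Summable fun y => b x y * |v y|) (hlam : lam < 0)
    (hharm : lap b m v x = lam * v x) (hx : 0 < v x) :
    ∃ y, 0 < v y ∧ 0 < b x y ∧ (1 - lam / deg b m x) * v x ≤ v y := by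
  have hbv : Summable fun y => b x y * v y := hvF.of_norm_bounded fun y => by
    rw [Real.norm_eq_abs, abs_mul, abs_of_nonneg (hb_nonneg x y)]
  have hsum := tsum_mul_eq_of_lap_eq (hm x).ne' (hb_sum x) hbv hharm
  have hsum_pos : 0 < ∑' y, b x y * v y := by
    rw [hsum]
    have := deg_nonneg hb_nonneg hm x
    have := hm x
    have : 0 < deg b m x - lam := by linarith
    positivity
  obtain ⟨y₀, hy₀⟩ : ∃ y, 0 < b x y := by
    by_contra! h
    have hzero : ∀ y, b x y = 0 := fun y => (h y).antisymm (hb_nonneg x y)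
    simp [hzero] at hsum_pos
  have hB : ∑' y, b x y = m x * deg b m x := by
    rw [deg]
    field_simp [(hm x).ne']
  have hdeg_pos : 0 < deg b m x := by
    have := (hb_sum x).tsum_pos (hb_nonneg x) y₀ hy₀
    rw [hB] at this
    exact pos_of_mul_pos_right this (hm x).le
  have hmean : (∑' y, b x y) * ((1 - lam / deg b m x) * v x) = ∑' y, b x y * v y := by
    rw [hB, hsum]
    field_simp
  obtain ⟨y, hby, hy⟩ :=
    exists_pos_weight_le_of_tsum_mul_le (hb_nonneg x) hy₀ (hb_sum x) hbv hmean.le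
  have hgrowth := one_le_one_sub_div_deg hb_nonneg hm hlam.le x
  exact ⟨y, (mul_pos (by linarith) hx).trans_le hy, hby, hy⟩

end WeightedGraph

theorem harmonic_growth_along_path_general {X : Type*} (b : X → X → ℝ) (m : X → ℝ)
    (hb_nonneg : ∀ x y, 0 ≤ b x y)
    (hb_sum : ∀ x, Summable fun y => b x y)
    (hm : ∀ x, 0 < m x)
    (v : X → ℝ) (hvF : ∀ x, Summable fun y => b x y * |v y|)
    (lam : ℝ) (hlam : lam < 0)
    (hharm : ∀ x, lap b m v x = lam * v x)
    (x₀ : X) (hpos : 0 < v x₀) :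
    ∃ p : ℕ → X, p 0 = x₀ ∧ (∀ n, 0 < b (p n) (p (n + 1))) ∧
      ∀ n, (∏ k ∈ Finset.range (n + 1), (1 - lam / deg b m (p k))) * v x₀ ≤ v (p (n + 1)) := by
  obtain ⟨p, hp0, hp⟩ := exists_seq_of_forall_exists
    (r := fun x y => 0 < b x y ∧ (1 - lam / deg b m x) * v x ≤ v y)
    (fun x hx => exists_adj_le_of_lap_eq hb_nonneg hb_sum hm (hvF x) hlam (hharm x) hx) hpos
  refine ⟨p, hp0, fun n => (hp n).2.1, fun n => ?_⟩
  have hfactor_nonneg k : 0 ≤ 1 - lam / deg b m (p k) :=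
    zero_le_one.trans (one_le_one_sub_div_deg hb_nonneg hm hlam.le (p k))
  simpa [hp0] using prod_range_mul_le_of_mul_le_succ (a := v ∘ p) hfactor_nonneg
    (fun k => (hp k).2.2) (n + 1)

/-- If `v` is a bounded `λ`-harmonic function (`λ < 0`) with `v(x₀) > 0`, then there is a
path `x₀ ∼ x₁ ∼ x₂ ∼ …` along which `v(x_{n+1}) ≥ ∏_{k=0}^{n} (1 − λ/Deg(x_k)) · v(x₀)`. -/
theorem harmonic_growth_along_path {X : Type*} (b : X → X → ℝ) (m : X → ℝ)
    (hb_symm : ∀ x y, b x y = b y x) (hb_nonneg : ∀ x y, 0 ≤ b x y)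
    (hb_diag : ∀ x, b x x = 0) (hb_sum : ∀ x, Summable fun y => b x y)
    (hm : ∀ x, 0 < m x)
    (v : X → ℝ) (hvF : ∀ x, Summable fun y => b x y * |v y|)
    (hvbd : ∃ C : ℝ, ∀ x, |v x| ≤ C)
    (lam : ℝ) (hlam : lam < 0)
    (hharm : ∀ x, lap b m v x = lam * v x)
    (x₀ : X) (hpos : 0 < v x₀) :
    ∃ p : ℕ → X, p 0 = x₀ ∧ (∀ n, 0 < b (p n) (p (n + 1))) ∧
      ∀ n, (∏ k ∈ Finset.range (n + 1), (1 - lam / deg b m (p k))) * v x₀ ≤ v (p (n + 1)) :=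
  harmonic_growth_along_path_general b m hb_nonneg hb_sum hm v hvF lam hlam hharm x₀ hpos
end

section
/- Let v : ℕ₀ → ℝ with v(0) > 0 satisfy the recursion v(r+1) − v(r) = (−λ/∂B(r)) ∑_{k=0}^r v(k) m(S_k) for all r ≥ 0, where λ < 0, ∂B(r) > 0, m(S_k) > 0 and V(r) = ∑_{k=0}^r m(S_k). Then v is strictly increasing and satisfies the two-sided bound (−λ ∑_{k=0}^r V(k)/∂B(k)) v(0) ≤ v(r+1) ≤ ∏_{k=0}^r (1 − λ V(k)/∂B(k)) v(0). Consequently, v is bounded if and only if ∑_{k=0}^∞ V(k)/∂B(k) < ∞. -/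
/-!
With `c r = -λ / ∂B(r)` and `w k = m(S_k)`, all increments
`v (r+1) - v r = c r * ∑_{k ≤ r} v k * w k` are positive, so `v` increases and the weighted sum
`∑_{k ≤ r} v k * w k` lies between `v 0 * V r` and `v r * V r`. The first estimate, summed over `r`,
gives `v n ≥ v 0 * (1 + ∑_{k < n} c k * V k)`; the second, iterated, gives
`v n ≤ ∏_{k < n} (1 + c k * V k) * v 0 ≤ exp (∑_{k < n} c k * V k) * v 0`. Hence `v` is bounded
exactly when `∑ c k * V k`, i.e. `∑ V k / ∂B(k)`, converges.
-/

open Finset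

section WeightedRecursion

variable {c w V v : ℕ → ℝ}

theorem Monotone.mul_sum_range_le_sum_mul (hv : Monotone v) (hw : ∀ k, 0 ≤ w k) (n : ℕ) :
    v 0 * ∑ k ∈ range (n + 1), w k ≤ ∑ k ∈ range (n + 1), v k * w k := by
  rw [mul_sum]
  exact sum_le_sum fun k _ => mul_le_mul_of_nonneg_right (hv k.zero_le) (hw k)

theorem Monotone.sum_mul_le_mul_sum_range (hv : Monotone v) (hw : ∀ k, 0 ≤ w k) (n : ℕ) :
    ∑ k ∈ range (n + 1), v k * w k ≤ v n * ∑ k ∈ range (n + 1), w k := by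
  rw [mul_sum]
  exact sum_le_sum fun k hk =>
    mul_le_mul_of_nonneg_right (hv (Nat.lt_succ_iff.mp (mem_range.mp hk))) (hw k)

theorem pos_of_sub_eq_mul_sum (hv0 : 0 < v 0) (hc : ∀ r, 0 ≤ c r) (hw : ∀ r, 0 ≤ w r)
    (hrec : ∀ r, v (r + 1) - v r = c r * ∑ k ∈ range (r + 1), v k * w k) (r : ℕ) :
    0 < v r := by
  induction r using Nat.strong_induction_on with
  | _ r ih =>
    cases r with
    | zero => exact hv0
    | succ r =>
      have hsum : 0 ≤ ∑ k ∈ range (r + 1), v k * w k :=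
        sum_nonneg fun k hk => mul_nonneg (ih k (mem_range.mp hk)).le (hw k)
      nlinarith [hrec r, mul_nonneg (hc r) hsum, ih r r.lt_succ_self]

theorem strictMono_of_sub_eq_mul_sum (hv0 : 0 < v 0) (hc : ∀ r, 0 < c r) (hw : ∀ r, 0 < w r)
    (hrec : ∀ r, v (r + 1) - v r = c r * ∑ k ∈ range (r + 1), v k * w k) : StrictMono v := by
  have hv := pos_of_sub_eq_mul_sum hv0 (fun r => (hc r).le) (fun r => (hw r).le) hrec
  refine strictMono_nat_of_lt_succ fun r => ?_
  have hsum : 0 < ∑ k ∈ range (r + 1), v k * w k :=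
    sum_pos (fun k _ => mul_pos (hv k) (hw k)) nonempty_range_add_one
  nlinarith [hrec r, mul_pos (hc r) hsum]

theorem le_of_sub_eq_mul_sum (hv : Monotone v) (hc : ∀ r, 0 ≤ c r) (hw : ∀ r, 0 ≤ w r)
    (hV : ∀ r, V r = ∑ k ∈ range (r + 1), w k)
    (hrec : ∀ r, v (r + 1) - v r = c r * ∑ k ∈ range (r + 1), v k * w k) (n : ℕ) :
    v 0 * (1 + ∑ k ∈ range n, c k * V k) ≤ v n := by
  induction n with
  | zero => simp
  | succ n ih =>
    have hstep := mul_le_mul_of_nonneg_left (hv.mul_sum_range_le_sum_mul hw n) (hc n)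
    rw [← hV, ← hrec] at hstep
    rw [sum_range_succ]
    linarith

theorem le_prod_of_sub_eq_mul_sum (hv : Monotone v) (hc : ∀ r, 0 ≤ c r) (hw : ∀ r, 0 ≤ w r)
    (hV : ∀ r, V r = ∑ k ∈ range (r + 1), w k)
    (hrec : ∀ r, v (r + 1) - v r = c r * ∑ k ∈ range (r + 1), v k * w k) (n : ℕ) :
    v n ≤ (∏ k ∈ range n, (1 + c k * V k)) * v 0 := by
  induction n with
  | zero => simp
  | succ n ih =>
    have hstep := mul_le_mul_of_nonneg_left (hv.sum_mul_le_mul_sum_range hw n) (hc n)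
    rw [← hV, ← hrec] at hstep
    have hfactor : 0 ≤ 1 + c n * V n :=
      add_nonneg zero_le_one (mul_nonneg (hc n) (hV n ▸ sum_nonneg fun k _ => hw k))
    calc v (n + 1) ≤ (1 + c n * V n) * v n := by linarith
      _ ≤ (1 + c n * V n) * ((∏ k ∈ range n, (1 + c k * V k)) * v 0) :=
        mul_le_mul_of_nonneg_left ih hfactor
      _ = (∏ k ∈ range (n + 1), (1 + c k * V k)) * v 0 := by rw [prod_range_succ]; ring

end WeightedRecursion

theorem bounded_iff_summable_of_le_of_le_prod {a v : ℕ → ℝ} (ha : ∀ k, 0 ≤ a k) (hv0 : 0 < v 0)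
    (hlow : ∀ n, v 0 * (1 + ∑ k ∈ range n, a k) ≤ v n)
    (hup : ∀ n, v n ≤ (∏ k ∈ range n, (1 + a k)) * v 0) :
    (∃ C, ∀ n, |v n| ≤ C) ↔ Summable a := by
  constructor
  · rintro ⟨C, hC⟩
    refine summable_of_sum_range_le ha (c := C / v 0) fun n => ?_
    rw [le_div_iff₀ hv0]
    nlinarith [hlow n, (le_abs_self (v n)).trans (hC n)]
  · intro ha_sum
    refine ⟨Real.exp (∑' k, a k) * v 0, fun n => ?_⟩
    have hvn : 0 < v n :=
      (mul_pos hv0 (add_pos_of_pos_of_nonneg one_pos (sum_nonneg fun k _ => ha k))).trans_le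
        (hlow n)
    rw [abs_of_pos hvn]
    calc v n ≤ (∏ k ∈ range n, (1 + a k)) * v 0 := hup n
      _ ≤ Real.exp (∑ k ∈ range n, a k) * v 0 := by
        gcongr
        exact Real.prod_one_add_le_exp_sum _ ha
      _ ≤ Real.exp (∑' k, a k) * v 0 := by
        gcongr
        exact ha_sum.sum_le_tsum _ fun k _ => ha k

/-- The key computation for weakly spherically symmetric graphs: a positive solution of
the spherical recursion is strictly increasing, satisfies a two-sided bound, and is
bounded iff `∑ V(k)/∂B(k) < ∞`. -/
theorem recursion_two_sided_bound (lam : ℝ) (hlam : lam < 0)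
    (dB mS : ℕ → ℝ) (hdB : ∀ r, 0 < dB r) (hmS : ∀ r, 0 < mS r)
    (V : ℕ → ℝ) (hV : ∀ r, V r = ∑ k ∈ Finset.range (r + 1), mS k)
    (v : ℕ → ℝ) (hv0 : 0 < v 0)
    (hrec : ∀ r, v (r + 1) - v r = (-lam / dB r) * ∑ k ∈ Finset.range (r + 1), v k * mS k) :
    StrictMono v ∧
    (∀ r, (-lam * ∑ k ∈ Finset.range (r + 1), V k / dB k) * v 0 ≤ v (r + 1) ∧
      v (r + 1) ≤ (∏ k ∈ Finset.range (r + 1), (1 - lam * V k / dB k)) * v 0) ∧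
    ((∃ C : ℝ, ∀ r, |v r| ≤ C) ↔ Summable fun k => V k / dB k) := by
  have hc : ∀ r, 0 < -lam / dB r := fun r => div_pos (neg_pos.mpr hlam) (hdB r)
  have hmono := strictMono_of_sub_eq_mul_sum hv0 hc hmS hrec
  have hlow :=
    le_of_sub_eq_mul_sum hmono.monotone (fun r => (hc r).le) (fun r => (hmS r).le) hV hrec
  have hup :=
    le_prod_of_sub_eq_mul_sum hmono.monotone (fun r => (hc r).le) (fun r => (hmS r).le) hV hrec
  have hterm : ∀ k, -lam / dB k * V k = -lam * (V k / dB k) := fun k => by ring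
  simp only [hterm] at hlow hup
  refine ⟨hmono, fun r => ⟨?_, ?_⟩, ?_⟩
  · have := hlow (r + 1)
    rw [← mul_sum] at this
    linarith
  · convert hup (r + 1) using 3 with k
    ring
  · have ha : ∀ k, 0 ≤ -lam * (V k / dB k) := fun k =>
      mul_nonneg (neg_nonneg.mpr hlam.le)
        (div_nonneg (hV k ▸ sum_nonneg fun j _ => (hmS j).le) (hdB k).le)
    rw [bounded_iff_summable_of_le_of_le_prod ha hv0 hlow hup,
      summable_mul_left_iff (neg_ne_zero.mpr hlam.ne)]
end

section
/- Let G be a spherically symmetric tree with branching numbers Deg_+(r). Then ∑_{r=0}^∞ V(r)/∂B(r) = ∞ if and only if ∑_{r=0}^∞ 1/Deg_+(r) = ∞, where m(S_r) = ∏_{k=0}^{r−1} Deg_+(k), V(r) = ∑_{k=0}^r m(S_k), and ∂B(r) = m(S_{r+1}). -/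
/-!
Put `a r = V(r) / m(S_r)`. Then `V(r)/∂B(r) = a r / Deg_+(r)`, `a r ≥ 1`, and
`a (r+1) = 1 + a r / Deg_+(r)`. The lower bound `a r ≥ 1` gives one direction. Conversely,
if `∑ 1/Deg_+(r)` converges then eventually `Deg_+(r) ≥ 2`, so the recursion keeps `a`
eventually bounded by a constant `C`, and `V(r)/∂B(r) ≤ C / Deg_+(r)` eventually.
-/

open Filter Finset

theorem le_max_of_le_one_add_half {a : ℕ → ℝ} {N : ℕ}
    (h : ∀ r ≥ N, a (r + 1) ≤ 1 + a r / 2) : ∀ r ≥ N, a r ≤ max (a N) 2 := by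
  intro r hr
  induction r, hr using Nat.le_induction with
  | base => exact le_max_left _ _
  | succ r hr ih => linarith [h r hr, le_max_right (a N) 2]

theorem summable_mul_iff_of_le_one_add_mul {a q : ℕ → ℝ} (hq : ∀ r, 0 ≤ q r)
    (ha : ∀ r, 1 ≤ a r) (hrec : ∀ r, a (r + 1) ≤ 1 + a r * q r) :
    Summable (fun r => a r * q r) ↔ Summable q := by
  refine ⟨fun h => h.of_nonneg_of_le hq fun r => le_mul_of_one_le_left (hq r) (ha r),
    fun h => ?_⟩
  obtain ⟨N, hN⟩ := eventually_atTop.1 (h.tendsto_atTop_zero.eventually (ge_mem_nhds one_half_pos))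
  have hbound : ∀ r ≥ N, a r ≤ max (a N) 2 :=
    le_max_of_le_one_add_half fun r hr => (hrec r).trans (by nlinarith [hN r hr, ha r])
  refine (h.mul_left (max (a N) 2)).of_norm_bounded_eventually_nat ?_
  filter_upwards [eventually_ge_atTop N] with r hr
  rw [Real.norm_of_nonneg (mul_nonneg (by linarith [ha r]) (hq r))]
  exact mul_le_mul_of_nonneg_right (hbound r hr) (hq r)

/-- For a spherically symmetric tree with branching numbers `Deg_+(r) ≥ 1`,
`m(S_r) = ∏_{k<r} Deg_+(k)`, `V(r) = ∑_{k≤r} m(S_k)` and `∂B(r) = m(S_{r+1})`,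
the series `∑ V(r)/∂B(r)` diverges iff `∑ 1/Deg_+(r)` diverges. -/
theorem tree_volume_boundary_iff_reciprocal_degree (Dp : ℕ → ℝ) (hDp : ∀ r, 1 ≤ Dp r)
    (mS V dB : ℕ → ℝ)
    (hmS : ∀ r, mS r = ∏ k ∈ Finset.range r, Dp k)
    (hV : ∀ r, V r = ∑ k ∈ Finset.range (r + 1), mS k)
    (hdB : ∀ r, dB r = mS (r + 1)) :
    (¬ Summable fun r => V r / dB r) ↔ ¬ Summable fun r => 1 / Dp r := by
  have hDpos (r : ℕ) : 0 < Dp r := zero_lt_one.trans_le (hDp r)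
  have hmpos (r : ℕ) : 0 < mS r := hmS r ▸ prod_pos fun k _ => hDpos k
  have hm_succ (r : ℕ) : mS (r + 1) = mS r * Dp r := by rw [hmS, hmS, prod_range_succ]
  have hV_succ (r : ℕ) : V (r + 1) = V r + mS (r + 1) := by rw [hV, hV, sum_range_succ]
  have hm_le_V (r : ℕ) : mS r ≤ V r :=
    hV r ▸ single_le_sum (fun k _ => (hmpos k).le) (self_mem_range_succ r)
  have hterm : (fun r => V r / dB r) = fun r => V r / mS r * (1 / Dp r) := by
    ext r
    rw [hdB, hm_succ, div_mul_div_comm, mul_one]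
  rw [hterm, not_iff_not]
  refine summable_mul_iff_of_le_one_add_mul (fun r => (one_div_pos.2 (hDpos r)).le)
    (fun r => (one_le_div (hmpos r)).2 (hm_le_V r)) fun r => le_of_eq ?_
  have := (hmpos r).ne'
  have := (hDpos r).ne'
  rw [hV_succ, hm_succ]
  field_simp
  ring
end

section
/- Let G = (X, b, m) be a connected weighted graph with combinatorial graph distance d. Then d is equivalent to an intrinsic metric (i.e., there exists an intrinsic pseudo metric ϱ and constants c, C > 0 with c·d ≤ ϱ ≤ C·d) if and only if the weighted degree Deg(x) = (1/m(x)) ∑_y b(x,y) is bounded on X. -/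
/-- There is a path of `n` edges from `x` to `y` in the graph `b`. -/
def HasPathLen {X : Type*} (b : X → X → ℝ) (x y : X) (n : ℕ) : Prop :=
  ∃ p : ℕ → X, p 0 = x ∧ p n = y ∧ ∀ i < n, 0 < b (p i) (p (i + 1))

/-- The combinatorial graph distance: least number of edges in a path joining `x` and `y`. -/
noncomputable def cdist {X : Type*} (b : X → X → ℝ) (x y : X) : ℕ :=
  sInf {n | HasPathLen b x y n}

/-- `ϱ` is a pseudo metric on `X`. -/
def IsPseudoMetric {X : Type*} (ϱ : X → X → ℝ) : Prop :=
  (∀ x y, 0 ≤ ϱ x y) ∧ (∀ x, ϱ x x = 0) ∧ (∀ x y, ϱ x y = ϱ y x) ∧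
    ∀ x y z, ϱ x z ≤ ϱ x y + ϱ y z

/-- `ϱ` is intrinsic for the weighted graph `(X,b,m)`. -/
def IsIntrinsic {X : Type*} (b : X → X → ℝ) (m : X → ℝ) (ϱ : X → X → ℝ) : Prop :=
  ∀ x, ∑' y, b x y * ϱ x y ^ 2 ≤ m x

lemma hp_symm {X : Type*} {b : X → X → ℝ} (hb_symm : ∀ x y, b x y = b y x)
    {x y : X} {n : ℕ} (h : HasPathLen b x y n) : HasPathLen b y x n := by
  obtain ⟨p, h0, hn, he⟩ := h
  refine ⟨fun i => p (n - i), by simpa, by simpa, fun i hi => ?_⟩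
  have h := he (n - (i + 1)) (by omega)
  have heq : n - (i + 1) + 1 = n - i := by omega
  rw [heq] at h
  rw [hb_symm]
  exact h

lemma hp_trans {X : Type*} {b : X → X → ℝ} {x y z : X} {n k : ℕ}
    (h1 : HasPathLen b x y n) (h2 : HasPathLen b y z k) : HasPathLen b x z (n + k) := by
  obtain ⟨p, p0, pn, pe⟩ := h1
  obtain ⟨q, q0, qk, qe⟩ := h2
  refine ⟨fun i => if i ≤ n then p i else q (i - n), by simp [p0], ?_, ?_⟩
  · by_cases h : n + k ≤ n
    · have hk : k = 0 := by omega
      simp [h, hk] at *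
      rw [pn, ← q0, qk]
    · simp only [h, if_neg]
      simpa using qk
  · intro i hi
    show 0 < b (if i ≤ n then p i else q (i - n)) (if i + 1 ≤ n then p (i + 1) else q (i + 1 - n))
    by_cases h : i + 1 ≤ n
    · simp only [show i ≤ n by omega, if_pos, h]
      exact pe i (by omega)
    · have hin : n ≤ i := by omega
      have key : (if i ≤ n then p i else q (i - n)) = q (i - n) := by
        by_cases h' : i ≤ n
        · have : i = n := by omega
          simp [h', this, pn, q0]
        · simp [h']
      rw [key]
      simp only [h, if_neg]
      have := qe (i - n) (by omega)
      have heq : i - n + 1 = i + 1 - n := by omega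
      rwa [heq] at this

lemma cdist_one {X : Type*} {b : X → X → ℝ} (hb_diag : ∀ x, b x x = 0)
    {x y : X} (h : 0 < b x y) : cdist b x y = 1 := by
  have hne : x ≠ y := by rintro rfl; simp [hb_diag] at h
  have h1 : HasPathLen b x y 1 :=
    ⟨fun i => if i = 0 then x else y, by simp, by simp, by intro i hi; interval_cases i; simp [h]⟩
  have hle : cdist b x y ≤ 1 := Nat.sInf_le h1
  have hne0 : cdist b x y ≠ 0 := by
    intro h0
    have : (0 : ℕ) ∈ {n | HasPathLen b x y n} := by
      rcases (Nat.sInf_eq_zero.mp h0) with h' | h'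
      · exact h'
      · exact absurd (show (1:ℕ) ∈ {n | HasPathLen b x y n} from h1) (h' ▸ Set.notMem_empty 1)
    obtain ⟨p, p0, pn, _⟩ := this
    exact hne (p0 ▸ pn ▸ rfl)
  omega

lemma cdist_symm {X : Type*} {b : X → X → ℝ} (hb_symm : ∀ x y, b x y = b y x) (x y : X) :
    cdist b x y = cdist b y x := by
  unfold cdist
  congr 1
  ext n
  exact ⟨hp_symm hb_symm, hp_symm hb_symm⟩

lemma cdist_triangle {X : Type*} {b : X → X → ℝ}
    (hconn : ∀ x y : X, ∃ n, HasPathLen b x y n) (x y z : X) :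
    cdist b x z ≤ cdist b x y + cdist b y z := by
  have h1 : HasPathLen b x y (cdist b x y) := Nat.sInf_mem (hconn x y)
  have h2 : HasPathLen b y z (cdist b y z) := Nat.sInf_mem (hconn y z)
  exact Nat.sInf_le (hp_trans h1 h2)

/-- For a connected weighted graph, the combinatorial graph distance is equivalent to an
intrinsic metric if and only if the weighted degree is bounded. -/
theorem cdist_equiv_intrinsic_iff_degree_bounded {X : Type*} (b : X → X → ℝ) (m : X → ℝ)
    (hb_symm : ∀ x y, b x y = b y x) (hb_nonneg : ∀ x y, 0 ≤ b x y)
    (hb_diag : ∀ x, b x x = 0) (hb_sum : ∀ x, Summable fun y => b x y)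
    (hm : ∀ x, 0 < m x)
    (hconn : ∀ x y : X, ∃ n, HasPathLen b x y n) :
    (∃ ϱ : X → X → ℝ, IsPseudoMetric ϱ ∧ IsIntrinsic b m ϱ ∧
      ∃ c C : ℝ, 0 < c ∧ 0 < C ∧ ∀ x y,
        c * (cdist b x y : ℝ) ≤ ϱ x y ∧ ϱ x y ≤ C * (cdist b x y : ℝ)) ↔
    ∃ D : ℝ, ∀ x, deg b m x ≤ D := by
  constructor
  · rintro ⟨ϱ, ⟨hpos, hself, hϱsymm, htri⟩, hintr, c, C, hc, hC, hbd⟩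
    refine ⟨1 / c ^ 2, fun x => ?_⟩
    have hpt : ∀ y, b x y * c ^ 2 ≤ b x y * ϱ x y ^ 2 := by
      intro y
      rcases eq_or_lt_of_le (hb_nonneg x y) with h | h
      · rw [← h]; ring_nf; rfl
      · have hd : cdist b x y = 1 := cdist_one hb_diag h
        have h1 := (hbd x y).1
        rw [hd] at h1; push_cast at h1
        have h2 : c ^ 2 ≤ ϱ x y ^ 2 := by nlinarith [hpos x y, sq_nonneg (ϱ x y - c)]
        exact mul_le_mul_of_nonneg_left h2 (hb_nonneg x y)
    have hpt2 : ∀ y, b x y * ϱ x y ^ 2 ≤ C ^ 2 * b x y := by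
      intro y
      rcases eq_or_lt_of_le (hb_nonneg x y) with h | h
      · rw [← h]; ring_nf; rfl
      · have hd : cdist b x y = 1 := cdist_one hb_diag h
        have h1 := (hbd x y).2
        rw [hd] at h1; push_cast at h1
        have h2 : ϱ x y ^ 2 ≤ C ^ 2 := by nlinarith [hpos x y]
        calc b x y * ϱ x y ^ 2 ≤ b x y * C ^ 2 :=
              mul_le_mul_of_nonneg_left h2 (hb_nonneg x y)
          _ = C ^ 2 * b x y := mul_comm _ _
    have hS : Summable (fun y => b x y * ϱ x y ^ 2) :=
      Summable.of_nonneg_of_le (fun y => mul_nonneg (hb_nonneg x y) (sq_nonneg _)) hpt2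
        ((hb_sum x).mul_left _)
    have h2 : ∑' y, b x y * c ^ 2 ≤ m x :=
      le_trans (Summable.tsum_le_tsum hpt ((hb_sum x).mul_right _) hS) (hintr x)
    rw [tsum_mul_right] at h2
    unfold deg
    rw [div_mul_eq_mul_div, one_mul, div_le_div_iff₀ (hm x) (pow_pos hc 2), one_mul]
    linarith
  · rintro ⟨D, hD⟩
    set D' : ℝ := max D 1 with hD'def
    have hD'1 : (1 : ℝ) ≤ D' := le_max_right _ _
    have hD'0 : (0 : ℝ) < D' := lt_of_lt_of_le one_pos hD'1
    set s : ℝ := (Real.sqrt D')⁻¹ with hsdef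
    have hs0 : 0 < s := inv_pos.mpr (Real.sqrt_pos.mpr hD'0)
    refine ⟨fun x y => s * (cdist b x y : ℝ), ⟨?_, ?_, ?_, ?_⟩, ?_, s, s, hs0, hs0,
      fun x y => ⟨le_refl _, le_refl _⟩⟩
    · intro x y; positivity
    · intro x
      have : cdist b x x = 0 :=
        Nat.sInf_eq_zero.mpr (Or.inl ⟨fun _ => x, rfl, rfl, fun i hi => absurd hi (by omega)⟩)
      simp [this]
    · intro x y
      show s * (cdist b x y : ℝ) = s * (cdist b y x : ℝ)
      rw [cdist_symm hb_symm x y]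
    · intro x y z
      have h := cdist_triangle hconn x y z
      have h' : (cdist b x z : ℝ) ≤ (cdist b x y : ℝ) + (cdist b y z : ℝ) := by
        exact_mod_cast h
      show s * (cdist b x z : ℝ) ≤ s * (cdist b x y : ℝ) + s * (cdist b y z : ℝ)
      nlinarith [hs0.le]
    · intro x
      have key : ∀ y, b x y * (s * (cdist b x y : ℝ)) ^ 2 = s ^ 2 * b x y := by
        intro y
        rcases eq_or_lt_of_le (hb_nonneg x y) with h | h
        · rw [← h]; ring
        · rw [cdist_one hb_diag h]; push_cast; ring
      have h1 : deg b m x ≤ D' := (hD x).trans (le_max_left D 1)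
      unfold deg at h1
      rw [div_mul_eq_mul_div, one_mul, div_le_iff₀ (hm x)] at h1
      have hsq : s ^ 2 = D'⁻¹ := by
        rw [hsdef, inv_pow, Real.sq_sqrt hD'0.le]
      calc ∑' y, b x y * (s * (cdist b x y : ℝ)) ^ 2 = ∑' y, s ^ 2 * b x y := tsum_congr key
        _ = s ^ 2 * ∑' y, b x y := tsum_mul_left
        _ ≤ s ^ 2 * (D' * m x) := by
            apply mul_le_mul_of_nonneg_left h1 (sq_nonneg s)
        _ = m x := by rw [hsq]; field_simp
end

section
/- Let G be a birth-death chain: X = ℕ₀ with x ∼ y iff |x−y| = 1, edge weights b(k,k+1) > 0 and measure m. For j < k define κ(j,k) = (1/(k−j)) · ((b(j,j+1) − b(j,j−1))/m(j) − (b(k,k+1) − b(k,k−1))/m(k)) (with b(0,−1) = 0). Then κ(j,k) = inf{ ∇_{jk} ℒf : f ∈ Lip(1), ∇_{jk} f = 1 }, where ∇_{jk} f = (f(j) − f(k))/(k−j) and Lip(1) is with respect to the distance |j−k|. -/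
/-- The Laplacian of a birth-death chain on ℕ with edge weights `β k = b(k, k+1)`
and measure `m`. -/
noncomputable def bdLap (β m : ℕ → ℝ) (f : ℕ → ℝ) (k : ℕ) : ℝ :=
  (1 / m k) * (β k * (f k - f (k + 1)) +
    (if k = 0 then 0 else β (k - 1) * (f k - f (k - 1))))

/-- 1-Lipschitz with respect to the distance `|j − k|` on ℕ. -/
def BdLip1 (f : ℕ → ℝ) : Prop := ∀ j k : ℕ, |f j - f k| ≤ |(j : ℝ) - (k : ℝ)|

/-- Ollivier Ricci curvature of a birth-death chain via the dual formula. -/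
noncomputable def bdKappa (β m : ℕ → ℝ) (j k : ℕ) : ℝ :=
  sInf {t : ℝ | ∃ f : ℕ → ℝ, BdLip1 f ∧ (f j - f k) / ((k : ℝ) - (j : ℝ)) = 1 ∧
    t = (bdLap β m f j - bdLap β m f k) / ((k : ℝ) - (j : ℝ))}

/-! Every admissible `f` satisfies `f j - f k = k - j`, so being 1-Lipschitz it must descend with
slope exactly `1` on `[j, k]`. This fixes the outgoing difference of `f` towards `j + 1` at `j`
and towards `k - 1` at `k`, while the remaining difference at each end lies in `[-1, 1]`. Since
`ℒ f (x)` is monotone in the differences `f x - f y`, the quotient `∇_{jk} ℒ f` is minimised by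
`f i = -i`, whose value is the stated formula. -/

namespace BdLip1

variable {f : ℕ → ℝ}

theorem sub_le_of_le (hf : BdLip1 f) {a b : ℕ} (hab : a ≤ b) : f a - f b ≤ b - a := by
  have hcast : (a : ℝ) ≤ b := by exact_mod_cast hab
  calc f a - f b ≤ |f a - f b| := le_abs_self _
    _ ≤ |(a : ℝ) - b| := hf a b
    _ = b - a := by rw [abs_sub_comm, abs_of_nonneg (sub_nonneg.mpr hcast)]

theorem sub_succ_le_one (hf : BdLip1 f) (i : ℕ) : f i - f (i + 1) ≤ 1 := by
  simpa using hf.sub_le_of_le i.le_succ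

theorem sub_succ_eq_one_of_sub_eq (hf : BdLip1 f) {j k : ℕ} (hjk : f j - f k = k - j)
    {i : ℕ} (hji : j ≤ i) (hik : i < k) : f i - f (i + 1) = 1 := by
  have hleft := hf.sub_le_of_le hji
  have hright := hf.sub_le_of_le hik
  have hstep := hf.sub_succ_le_one i
  push_cast at hright
  linarith

end BdLip1

theorem bdLip1_neg_natCast : BdLip1 fun i => -(i : ℝ) := by
  intro a b
  rw [neg_sub_neg, abs_sub_comm]

theorem bdLap_neg_natCast (β m : ℕ → ℝ) (k : ℕ) :
    bdLap β m (fun i => -(i : ℝ)) k = (β k - if k = 0 then 0 else β (k - 1)) / m k := by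
  unfold bdLap
  split_ifs with hk
  · push_cast
    ring
  · simp only [Nat.cast_sub (Nat.one_le_iff_ne_zero.mpr hk)]
    push_cast
    ring

theorem bdLap_le_bdLap {β m f g : ℕ → ℝ} {k : ℕ} (hβ : ∀ i, 0 ≤ β i) (hm : 0 ≤ m k)
    (hsucc : f k - f (k + 1) ≤ g k - g (k + 1))
    (hpred : k ≠ 0 → f k - f (k - 1) ≤ g k - g (k - 1)) :
    bdLap β m f k ≤ bdLap β m g k := by
  unfold bdLap
  gcongr
  · exact hβ k
  · split_ifs with hk
    · rfl
    · exact mul_le_mul_of_nonneg_left (hpred hk) (hβ _)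

/-- The explicit formula for the Ollivier Ricci curvature of a birth-death chain:
`κ(j,k) = (1/(k−j)) ((b(j,j+1)−b(j,j−1))/m(j) − (b(k,k+1)−b(k,k−1))/m(k))`. -/
theorem bdKappa_formula (β m : ℕ → ℝ) (hβ : ∀ k, 0 < β k) (hm : ∀ k, 0 < m k)
    (j k : ℕ) (hjk : j < k) :
    bdKappa β m j k = (1 / ((k : ℝ) - (j : ℝ))) *
      ((β j - (if j = 0 then 0 else β (j - 1))) / m j - (β k - β (k - 1)) / m k) := by
  set g : ℕ → ℝ := fun i => -(i : ℝ)
  have hdist : (0 : ℝ) < k - j := sub_pos.mpr (by exact_mod_cast hjk)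
  have hlap_g_k : (β k - β (k - 1)) / m k = bdLap β m g k := by
    rw [bdLap_neg_natCast, if_neg (by omega)]
  rw [one_div_mul_eq_div, hlap_g_k, ← bdLap_neg_natCast]
  refine IsLeast.csInf_eq ⟨⟨g, bdLip1_neg_natCast, ?_, rfl⟩, ?_⟩
  · rw [div_eq_one_iff_eq hdist.ne']
    ring
  rintro _ ⟨f, hf, hgrad, rfl⟩
  have hfjk : f j - f k = k - j := by rwa [div_eq_one_iff_eq hdist.ne'] at hgrad
  obtain ⟨d, rfl⟩ := Nat.exists_eq_add_of_lt hjk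
  have hstep_j := hf.sub_succ_eq_one_of_sub_eq hfjk le_rfl hjk
  have hstep_k := hf.sub_succ_eq_one_of_sub_eq hfjk (i := j + d) (by omega) (by omega)
  have hlap_j : bdLap β m g j ≤ bdLap β m f j := by
    refine bdLap_le_bdLap (fun n => (hβ n).le) (hm j).le (by simp [g, hstep_j]) fun hj => ?_
    obtain ⟨j', rfl⟩ := Nat.exists_eq_succ_of_ne_zero hj
    have := hf.sub_succ_le_one j'
    simp only [g, Nat.succ_sub_one, Nat.cast_succ]
    linarith
  have hlap_k : bdLap β m f (j + d + 1) ≤ bdLap β m g (j + d + 1) := by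
    refine bdLap_le_bdLap (fun n => (hβ n).le) (hm _).le ?_ fun _ => ?_
    · have := hf.sub_succ_le_one (j + d + 1)
      simp only [g, Nat.cast_succ]
      linarith
    · simp only [g, Nat.add_sub_cancel, Nat.cast_succ]
      linarith
  exact div_le_div_of_nonneg_right (by linarith) hdist.le
end
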